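/- arXiv:1511.07289 — 2 statements merged into one kernel-verified Lean document; each statement's English description precedes it below -/
import Mathlib

section
/- Let (Ω, ℙ) be a probability space and a : Ω → ℝⁿ a random vector whose componentwise products aᵢ aⱼ are all integrable. Let μ ∈ ℝⁿ be the mean, μᵢ = E[aᵢ], let Σ be the n×n second-moment matrix Σᵢⱼ = E[aᵢ aⱼ], and let V = Σ − μ μᵀ be the covariance matrix. Assume V is positive definite. Then Σ is invertible and μᵀ Σ⁻¹ μ ≤ 1. -/
open Matrix MeasureTheory

lemma vecMulVec_mulVec' {n : ℕ} (u v x : Fin n → ℝ) :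
    Matrix.vecMulVec u v *ᵥ x = (v ⬝ᵥ x) • u := by
  ext i
  simp [Matrix.mulVec, Matrix.vecMulVec_apply, dotProduct, Finset.mul_sum, mul_comm,
    mul_left_comm]

lemma posSemidef_vecMulVec_self {n : ℕ} (u : Fin n → ℝ) :
    (Matrix.vecMulVec u u).PosSemidef := by
  rw [posSemidef_iff_dotProduct_mulVec]
  constructor
  · ext i j
    simp [Matrix.conjTranspose_apply, Matrix.vecMulVec_apply, mul_comm]
  · intro x
    rw [vecMulVec_mulVec', dotProduct_smul]
    simp only [star_trivial, smul_eq_mul, dotProduct_comm u x]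
    exact mul_self_nonneg _

/-- Lemma 2, first part: if the covariance matrix `V = Σ − μ μᵀ` of a random
vector `a` is positive definite, then the second-moment matrix `Σ` is
invertible and `μᵀ Σ⁻¹ μ ≤ 1`. -/
theorem secondMoment_quadratic_le_one (n : ℕ) (Ω : Type*) [MeasureSpace Ω]
    [IsProbabilityMeasure (volume : Measure Ω)]
    (a : Ω → Fin n → ℝ)
    (hInt : ∀ i j, Integrable (fun ω => a ω i * a ω j))
    (hV : (Matrix.of (fun i j => ∫ ω, a ω i * a ω j) -
        Matrix.vecMulVec (fun i => ∫ ω, a ω i) (fun i => ∫ ω, a ω i)).PosDef) :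
    IsUnit (Matrix.of (fun i j : Fin n => ∫ ω, a ω i * a ω j)).det ∧
    (fun i => ∫ ω, a ω i) ⬝ᵥ
      ((Matrix.of (fun i j : Fin n => ∫ ω, a ω i * a ω j))⁻¹ *ᵥ
        fun i => ∫ ω, a ω i) ≤ 1 := by
  set μ : Fin n → ℝ := fun i => ∫ ω, a ω i with hμ
  set S : Matrix (Fin n) (Fin n) ℝ := Matrix.of (fun i j => ∫ ω, a ω i * a ω j) with hS
  set V : Matrix (Fin n) (Fin n) ℝ := S - Matrix.vecMulVec μ μ with hVdef
  have hSeq : S = V + Matrix.vecMulVec μ μ := by simp [hVdef]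
  have hSpos : S.PosDef := hSeq ▸ hV.add_posSemidef (posSemidef_vecMulVec_self μ)
  have hdet : IsUnit S.det := hSpos.det_pos.ne'.isUnit
  refine ⟨hdet, ?_⟩
  set w : Fin n → ℝ := S⁻¹ *ᵥ μ with hw
  have hSw : S *ᵥ w = μ := by
    rw [hw, Matrix.mulVec_mulVec, Matrix.mul_nonsing_inv _ hdet, Matrix.one_mulVec]
  set q : ℝ := μ ⬝ᵥ w with hq
  have hq0 : 0 ≤ q := by
    have := hSpos.inv.posSemidef.dotProduct_mulVec_nonneg μ
    simpa [hq, hw] using this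
  have hVw : 0 ≤ w ⬝ᵥ (V *ᵥ w) := by
    have := hV.posSemidef.dotProduct_mulVec_nonneg w
    simpa using this
  have hkey : w ⬝ᵥ (V *ᵥ w) = q - q * q := by
    rw [hVdef, Matrix.sub_mulVec, dotProduct_sub, hSw, vecMulVec_mulVec',
      dotProduct_smul]
    have : w ⬝ᵥ μ = q := by rw [hq, dotProduct_comm]
    rw [this, hq, smul_eq_mul]
  nlinarith [hVw, hq0, hkey]
end

section
/- Let (Ω, ℙ) be a probability space, a : Ω → ℝⁿ a random vector and δ : Ω → ℝ a random variable such that δ², δ² aₖ and δ² aₖ aⱼ are integrable for all indices k, j, and additionally each aₖ is integrable. Set c = E[δ²], bₖ = E[δ² aₖ], Aₖⱼ = E[δ² aₖ aⱼ], νₖ = E[aₖ], and assume the block matrix F = [[A, b],[bᵀ, c]] is positive definite. Define μ_q = c⁻¹ b, V_q = c⁻¹ A − μ_q μ_qᵀ, and k = 1 + (μ_q − ν)ᵀ V_q⁻¹ μ_q. Then for every g ∈ ℝⁿ and g₀ ∈ ℝ, writing (Δw, Δw₀) := F⁻¹ · (g, g₀), the bias shift satisfies νᵀ Δw + Δw₀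 = (ν − k μ_q)ᵀ A⁻¹ g + k c⁻¹ g₀. -/
open Matrix MeasureTheory

/-- Theorem 2 of the paper (bias shift): with `c = E[δ²]`, `bₖ = E[δ² aₖ]`,
`Aₖⱼ = E[δ² aₖ aⱼ]`, `νₖ = E[aₖ]`, positive definite Fisher matrix
`F = [[A, b],[bᵀ, c]]`, `μ_q = c⁻¹ b`, `V_q = c⁻¹ A − μ_q μ_qᵀ` and
`k = 1 + (μ_q − ν)ᵀ V_q⁻¹ μ_q`, the bias shift of the unit natural gradient
update `(Δw, Δw₀) = F⁻¹ (g, g₀)` satisfies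
`νᵀ Δw + Δw₀ = (ν − k μ_q)ᵀ A⁻¹ g + k c⁻¹ g₀`. -/
theorem bias_shift_correction (n : ℕ) (Ω : Type*) [MeasureSpace Ω]
    [IsProbabilityMeasure (volume : Measure Ω)]
    (a : Ω → Fin n → ℝ) (δ : Ω → ℝ)
    (hδ : Integrable (fun ω => δ ω ^ 2))
    (hδa : ∀ k, Integrable (fun ω => δ ω ^ 2 * a ω k))
    (hδaa : ∀ k j, Integrable (fun ω => δ ω ^ 2 * a ω k * a ω j))
    (ha : ∀ k, Integrable (fun ω => a ω k))
    (c : ℝ) (hc : c = ∫ ω, δ ω ^ 2)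
    (b : Fin n → ℝ) (hb : b = fun k => ∫ ω, δ ω ^ 2 * a ω k)
    (A : Matrix (Fin n) (Fin n) ℝ)
    (hA : A = Matrix.of fun k j => ∫ ω, δ ω ^ 2 * a ω k * a ω j)
    (ν : Fin n → ℝ) (hν : ν = fun k => ∫ ω, a ω k)
    (hF : (Matrix.fromBlocks A (Matrix.replicateCol Unit b) (Matrix.replicateRow Unit b)
            (Matrix.of fun _ _ : Unit => c)).PosDef)
    (μq : Fin n → ℝ) (hμq : μq = c⁻¹ • b)
    (Vq : Matrix (Fin n) (Fin n) ℝ)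
    (hVq : Vq = c⁻¹ • A - Matrix.vecMulVec μq μq)
    (k : ℝ) (hk : k = 1 + (μq - ν) ⬝ᵥ (Vq⁻¹ *ᵥ μq))
    (g : Fin n → ℝ) (g₀ : ℝ) :
    ν ⬝ᵥ (fun i =>
        ((Matrix.fromBlocks A (Matrix.replicateCol Unit b) (Matrix.replicateRow Unit b)
            (Matrix.of fun _ _ : Unit => c))⁻¹ *ᵥ
          Sum.elim g (fun _ => g₀)) (Sum.inl i)) +
      ((Matrix.fromBlocks A (Matrix.replicateCol Unit b) (Matrix.replicateRow Unit b)
          (Matrix.of fun _ _ : Unit => c))⁻¹ *ᵥ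
        Sum.elim g (fun _ => g₀)) (Sum.inr ()) =
    (ν - k • μq) ⬝ᵥ (A⁻¹ *ᵥ g) + k * c⁻¹ * g₀ := by
  clear hc hb hν hδ hδa hδaa ha
  set F : Matrix (Fin n ⊕ Unit) (Fin n ⊕ Unit) ℝ :=
    Matrix.fromBlocks A (Matrix.replicateCol Unit b) (Matrix.replicateRow Unit b)
      (Matrix.of fun _ _ : Unit => c) with hFdef
  -- entrywise symmetry of A
  have hAe : ∀ i j, A i j = A j i := by
    intro i j
    simp only [hA, Matrix.of_apply]
    congr 1
    ext ω
    ring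
  have hAsym : A.IsHermitian := by
    ext i j
    simp [Matrix.conjTranspose_apply, hAe i j]
  -- block helper lemmas
  have hcol : ∀ r : ℝ, Matrix.replicateCol Unit b *ᵥ (fun _ : Unit => r) = r • b := by
    intro r
    ext i
    simp [Matrix.mulVec, dotProduct, mul_comm]
  have hrow : ∀ x : Fin n → ℝ, Matrix.replicateRow Unit b *ᵥ x = fun _ : Unit => b ⬝ᵥ x := by
    intro x
    ext j
    simp [Matrix.mulVec, dotProduct]
  have hof : ∀ r : ℝ, (Matrix.of fun _ _ : Unit => c) *ᵥ (fun _ : Unit => r) =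
      fun _ : Unit => c * r := by
    intro r
    ext j
    simp [Matrix.mulVec, dotProduct]
  have hudot : ∀ r : ℝ, ∀ y : Unit → ℝ, (fun _ : Unit => r) ⬝ᵥ y = r * y () := by
    intro r y
    simp [dotProduct]
  -- A is positive definite
  have hApd : A.PosDef := by
    refine Matrix.PosDef.of_dotProduct_mulVec_pos hAsym fun x hx => ?_
    have hy : (Sum.elim x (0 : Unit → ℝ)) ≠ 0 := by
      intro h
      apply hx
      ext i
      exact congrFun h (Sum.inl i)
    have := hF.dotProduct_mulVec_pos (x := Sum.elim x 0) hy
    simpa [hFdef, Matrix.fromBlocks_mulVec, sumElim_dotProduct_sumElim,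
      Matrix.mulVec_zero] using this
  have hAdet : IsUnit A.det := isUnit_iff_ne_zero.2 hApd.det_pos.ne'
  have hAinv : ∀ v : Fin n → ℝ, A *ᵥ (A⁻¹ *ᵥ v) = v := by
    intro v
    rw [Matrix.mulVec_mulVec, Matrix.mul_nonsing_inv A hAdet, Matrix.one_mulVec]
  -- notation
  set u : Fin n → ℝ := A⁻¹ *ᵥ b with hu
  set w : Fin n → ℝ := A⁻¹ *ᵥ g with hw
  set t : ℝ := b ⬝ᵥ w with ht
  set β : ℝ := b ⬝ᵥ u with hβ
  set s : ℝ := c - β with hs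
  have hAu : A *ᵥ u = b := by rw [hu, hAinv]
  have hAw : A *ᵥ w = g := by rw [hw, hAinv]
  have hβs : β = c - s := by rw [hs]; ring
  -- c > 0
  have hcpos : 0 < c := by
    have hy : (Sum.elim (0 : Fin n → ℝ) (fun _ : Unit => (1:ℝ))) ≠ 0 := by
      intro h
      have := congrFun h (Sum.inr ())
      simp at this
    have h2 := hF.dotProduct_mulVec_pos (x := Sum.elim 0 fun _ : Unit => 1) hy
    have hmv : F *ᵥ Sum.elim (0 : Fin n → ℝ) (fun _ : Unit => (1:ℝ)) =
        Sum.elim b (fun _ => c) := by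
      rw [hFdef, Matrix.fromBlocks_mulVec]
      simp only [Sum.elim_comp_inl, Sum.elim_comp_inr, hcol, hrow, hof,
        Matrix.mulVec_zero, dotProduct_zero, one_smul]
      funext x
      cases x <;> simp
    rw [hmv] at h2
    simpa [sumElim_dotProduct_sumElim, dotProduct] using h2
  have hc0 : c ≠ 0 := hcpos.ne'
  -- Schur complement s > 0
  have hspos : 0 < s := by
    have hy : (Sum.elim (-u) (fun _ : Unit => (1:ℝ))) ≠ 0 := by
      intro h
      have := congrFun h (Sum.inr ())
      simp at this
    have h2 := hF.dotProduct_mulVec_pos (x := Sum.elim (-u) fun _ : Unit => 1) hy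
    have hAnu : A *ᵥ (-u) = -b := by rw [Matrix.mulVec_neg, hAu]
    have hmv : F *ᵥ Sum.elim (-u) (fun _ : Unit => (1:ℝ)) =
        Sum.elim (0 : Fin n → ℝ) (fun _ => s) := by
      rw [hFdef, Matrix.fromBlocks_mulVec]
      simp only [Sum.elim_comp_inl, Sum.elim_comp_inr, hAnu, hcol, hrow, hof, one_smul]
      funext x
      cases x with
      | inl i => simp
      | inr j =>
        simp only [Sum.elim_inr, Pi.add_apply, dotProduct_neg, mul_one]
        rw [← hβ, hs]
        ring
    rw [hmv] at h2
    simpa [sumElim_dotProduct_sumElim, dotProduct] using h2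
  have hs0 : s ≠ 0 := hspos.ne'
  -- mulVec formula for Vq
  have hVqmul : ∀ x : Fin n → ℝ, Vq *ᵥ x = c⁻¹ • (A *ᵥ x) - (μq ⬝ᵥ x) • μq := by
    intro x
    rw [hVq, Matrix.sub_mulVec, Matrix.smul_mulVec]
    congr 1
    ext i
    simp only [Matrix.mulVec, dotProduct, Matrix.vecMulVec_apply, Pi.smul_apply,
      smul_eq_mul, Finset.sum_mul, Finset.mul_sum]
    exact Finset.sum_congr rfl fun j _ => by ring
  have hμdot : ∀ x : Fin n → ℝ, μq ⬝ᵥ x = c⁻¹ * (b ⬝ᵥ x) := by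
    intro x
    simp only [hμq, dotProduct, Pi.smul_apply, smul_eq_mul, Finset.mul_sum]
    exact Finset.sum_congr rfl fun j _ => by ring
  -- Vq is positive definite
  have hVqpd : Vq.PosDef := by
    refine Matrix.PosDef.of_dotProduct_mulVec_pos ?_ ?_
    · ext i j
      simp [hVq, Matrix.conjTranspose_apply, Matrix.vecMulVec_apply, hAe i j]
      ring
    · intro x hx
      set r : ℝ := -c⁻¹ * (b ⬝ᵥ x) with hr
      have hy : (Sum.elim x (fun _ : Unit => r)) ≠ 0 := by
        intro h
        apply hx
        ext i
        exact congrFun h (Sum.inl i)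
      have h2 := hF.dotProduct_mulVec_pos hy
      have hmv : F *ᵥ Sum.elim x (fun _ : Unit => r) =
          Sum.elim (A *ᵥ x + r • b) (fun _ => b ⬝ᵥ x + c * r) := by
        rw [hFdef, Matrix.fromBlocks_mulVec]
        simp only [Sum.elim_comp_inl, Sum.elim_comp_inr, hcol, hrow, hof]
        congr 1
      rw [hmv] at h2
      have h3 : (0:ℝ) < x ⬝ᵥ (A *ᵥ x) + r * (x ⬝ᵥ b) + r * (b ⬝ᵥ x + c * r) := by
        have := h2
        simp only [star_trivial, sumElim_dotProduct_sumElim,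
          dotProduct_add, dotProduct_smul, smul_eq_mul] at this
        have hud : ((fun _ : Unit => r) ⬝ᵥ fun _ : Unit => b ⬝ᵥ x + c * r) =
            r * (b ⬝ᵥ x + c * r) := by
          simp [dotProduct]
        rw [hud] at this
        linarith
      have hxb : x ⬝ᵥ b = b ⬝ᵥ x := dotProduct_comm x b
      rw [hxb] at h3
      have hpos : 0 < x ⬝ᵥ (A *ᵥ x) - c⁻¹ * (b ⬝ᵥ x) ^ 2 := by
        have hexp : x ⬝ᵥ (A *ᵥ x) + r * (b ⬝ᵥ x) + r * (b ⬝ᵥ x + c * r) =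
            x ⬝ᵥ (A *ᵥ x) - c⁻¹ * (b ⬝ᵥ x) ^ 2 := by
          rw [hr]
          field_simp
          ring
        linarith [hexp ▸ h3]
      have hval : x ⬝ᵥ (Vq *ᵥ x) = c⁻¹ * (x ⬝ᵥ (A *ᵥ x) - c⁻¹ * (b ⬝ᵥ x) ^ 2) := by
        rw [hVqmul, dotProduct_sub, dotProduct_smul, dotProduct_smul,
          hμdot x, dotProduct_comm x μq, hμdot x]
        simp only [smul_eq_mul]
        ring
      have : 0 < x ⬝ᵥ (Vq *ᵥ x) := by
        rw [hval]
        exact mul_pos (inv_pos.2 hcpos) hpos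
      simpa using this
  have hVqdet : IsUnit Vq.det := isUnit_iff_ne_zero.2 hVqpd.det_pos.ne'
  -- compute Vq⁻¹ *ᵥ μq
  have hμu : μq ⬝ᵥ u = c⁻¹ * β := by rw [hμdot, hβ]
  have hVqinvμ : Vq⁻¹ *ᵥ μq = (c * s⁻¹) • u := by
    have key : Vq *ᵥ ((c * s⁻¹) • u) = μq := by
      rw [Matrix.mulVec_smul, hVqmul u, hμu, hAu, hμq]
      ext i
      simp only [Pi.smul_apply, Pi.sub_apply, smul_eq_mul]
      rw [hβs]
      field_simp
      ring
    rw [← key, Matrix.mulVec_mulVec, Matrix.nonsing_inv_mul Vq hVqdet, Matrix.one_mulVec]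
  -- the value of k
  have hkval : k = c * s⁻¹ * (1 - ν ⬝ᵥ u) := by
    rw [hk, hVqinvμ]
    rw [dotProduct_smul, sub_dotProduct, hμu]
    simp only [smul_eq_mul]
    rw [hβs]
    field_simp
    ring
  -- the natural gradient update
  set Δw : Fin n → ℝ := w + (s⁻¹ * (t - g₀)) • u with hΔw
  set Δw₀ : ℝ := s⁻¹ * (g₀ - t) with hΔw₀
  have hFdetu : IsUnit F.det := isUnit_iff_ne_zero.2 hF.det_pos.ne'
  have hsolve : F⁻¹ *ᵥ Sum.elim g (fun _ => g₀) = Sum.elim Δw (fun _ => Δw₀) := by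
    have hAΔw : A *ᵥ Δw = g + (s⁻¹ * (t - g₀)) • b := by
      rw [hΔw, Matrix.mulVec_add, Matrix.mulVec_smul, hAu, hAw]
    have hbΔw : b ⬝ᵥ Δw = t + (s⁻¹ * (t - g₀)) * β := by
      rw [hΔw, dotProduct_add, dotProduct_smul, ← ht, ← hβ]
      simp [smul_eq_mul]
    have key : F *ᵥ Sum.elim Δw (fun _ => Δw₀) = Sum.elim g (fun _ => g₀) := by
      rw [hFdef, Matrix.fromBlocks_mulVec]
      simp only [Sum.elim_comp_inl, Sum.elim_comp_inr, hcol, hrow, hof, hAΔw, hbΔw]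
      funext x
      cases x with
      | inl i =>
        simp only [Sum.elim_inl, Pi.add_apply, Pi.smul_apply, smul_eq_mul, hΔw₀]
        ring
      | inr j =>
        simp only [Sum.elim_inr, Pi.add_apply, hΔw₀]
        rw [hβs]
        field_simp
        ring
    rw [← key, Matrix.mulVec_mulVec, Matrix.nonsing_inv_mul F hFdetu, Matrix.one_mulVec]
  rw [hsolve]
  -- final computation
  have hLHS : (ν ⬝ᵥ fun i => Sum.elim Δw (fun _ : Unit => Δw₀) (Sum.inl i)) +
      Sum.elim Δw (fun _ : Unit => Δw₀) (Sum.inr ()) =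
      ν ⬝ᵥ w + (s⁻¹ * (t - g₀)) * (ν ⬝ᵥ u) + s⁻¹ * (g₀ - t) := by
    have h1 : (fun i => Sum.elim Δw (fun _ : Unit => Δw₀) (Sum.inl i)) = Δw := rfl
    rw [h1]
    simp only [Sum.elim_inr, hΔw, hΔw₀, dotProduct_add, dotProduct_smul,
      smul_eq_mul]
  rw [hLHS]
  have hRHS : (ν - k • μq) ⬝ᵥ w = ν ⬝ᵥ w - k * (c⁻¹ * t) := by
    rw [sub_dotProduct, smul_dotProduct, hμdot w, ← ht]
    simp [smul_eq_mul]
  rw [hRHS, hkval]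
  field_simp
  ring
end
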